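/- Let F be a C¹ norm on ℝⁿ with C¹ dual norm F°. Then for every x ≠ 0: F(x) · ∇F°(∇F(x)) = x and F°(x) · ∇F(∇F°(x)) = x. -/

import Mathlib

/-!
Write `F°` for the dual gauge. Euler's identity `⟪∇F x, x⟫ = F x` and the supporting-hyperplane
inequality `⟪∇F x, ξ⟫ ≤ F ξ` of the convex, positively homogeneous `F` give `F°(∇F x) = 1`.
Hence `w ↦ F x * F° w - ⟪x, w⟫`, which is nonnegative by the definition of `F°`, vanishes at
`w = ∇F x`, and the first-order condition at this minimum is `F x • ∇F°(∇F x) = x`.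
The second identity follows the same way with the roles of `F` and `F°` exchanged, once
`F(∇F° x) = 1` is known: `F° x = ⟪x, ∇F° x⟫ ≤ F° x * F(∇F° x)`, and in the other direction
`F z = ⟪z, ∇F z⟫ ≤ F°(∇F z) = 1` for `z = ∇F° x`, by the supporting-hyperplane inequality of the
convex function `F°` at `x`. Finite dimension enters only through a bound `F ≥ c ‖·‖`, `c > 0`,
which makes the supremum defining `F°` finite.
-/

open Set
open scoped RealInnerProductSpace

section Gradient

variable {E : Type*} [NormedAddCommGroup E] [InnerProductSpace ℝ E] [CompleteSpace E]

theorem inner_gradient_self_of_smul_eq {f : E → ℝ} {x : E} (hd : DifferentiableAt ℝ f x)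
    (hhom : ∀ t : ℝ, 0 < t → f (t • x) = t * f x) : ⟪gradient f x, x⟫ = f x := by
  have hf : HasFDerivAt f (fderiv ℝ f x) ((1 : ℝ) • x) := by simpa using hd.hasFDerivAt
  have hray : HasDerivAt (fun t : ℝ => f (t • x)) ⟪gradient f x, x⟫ 1 := by
    have := hf.comp_hasDerivAt (1 : ℝ) ((hasDerivAt_id (1 : ℝ)).smul_const x)
    rwa [one_smul, ← inner_gradient_left] at this
  have hlin : (fun t : ℝ => f (t • x)) =ᶠ[nhds 1] fun t => t * f x :=
    Filter.eventually_of_mem (Ioi_mem_nhds one_pos) fun t ht => hhom t ht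
  have hscale : HasDerivAt (fun t : ℝ => t * f x) (f x) 1 := by
    simpa using (hasDerivAt_id (1 : ℝ)).mul_const (f x)
  exact hray.unique (hscale.congr_of_eventuallyEq hlin)

theorem gradient_ne_zero_of_smul_eq {f : E → ℝ} {x : E} (hd : DifferentiableAt ℝ f x)
    (hhom : ∀ t : ℝ, 0 < t → f (t • x) = t * f x) (hfx : f x ≠ 0) : gradient f x ≠ 0 := by
  intro h
  rw [← inner_gradient_self_of_smul_eq hd hhom, h, inner_zero_left] at hfx
  exact hfx rfl

theorem ConvexOn.inner_gradient_sub_le {f : E → ℝ} (hf : ConvexOn ℝ univ f) {x : E}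
    (hd : DifferentiableAt ℝ f x) (y : E) : ⟪gradient f x, y - x⟫ ≤ f y - f x := by
  have hf' : HasFDerivAt f (fderiv ℝ f x) (AffineMap.lineMap x y (0 : ℝ)) := by
    simpa using hd.hasFDerivAt
  have hseg : HasDerivAt (f ∘ AffineMap.lineMap (k := ℝ) x y) ⟪gradient f x, y - x⟫ 0 := by
    simpa [inner_gradient_left] using hf'.comp_hasDerivAt (0 : ℝ) AffineMap.hasDerivAt_lineMap
  simpa [slope] using ((hf.comp_affineMap (AffineMap.lineMap x y)).le_slope_of_hasDerivAt
    (mem_univ 0) (mem_univ 1) one_pos hseg)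

theorem ConvexOn.inner_gradient_le_of_smul_eq {f : E → ℝ} (hf : ConvexOn ℝ univ f) {x : E}
    (hd : DifferentiableAt ℝ f x) (hhom : ∀ t : ℝ, 0 < t → f (t • x) = t * f x) (y : E) :
    ⟪gradient f x, y⟫ ≤ f y := by
  have := hf.inner_gradient_sub_le hd y
  rw [inner_sub_right, inner_gradient_self_of_smul_eq hd hhom] at this
  linarith

theorem smul_gradient_eq_of_inner_le {φ : E → ℝ} {c : ℝ} {a y : E} (hd : DifferentiableAt ℝ φ y)
    (hle : ∀ w, ⟪a, w⟫ ≤ c * φ w) (heq : ⟪a, y⟫ = c * φ y) : c • gradient φ y = a := by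
  have hmin : IsLocalMin (fun w => c * φ w - innerSL ℝ a w) y :=
    Filter.Eventually.of_forall fun w => by
      simp only [innerSL_apply_apply, heq, sub_self, sub_nonneg, hle w]
  have hzero := hmin.hasFDerivAt_eq_zero
    ((hd.hasFDerivAt.const_mul c).sub (innerSL ℝ a).hasFDerivAt)
  refine ext_inner_right ℝ fun v => ?_
  have := congrArg (· v) hzero
  simp only [sub_apply, smul_apply, innerSL_apply_apply, zero_apply, sub_eq_zero,
    smul_eq_mul] at this
  rw [real_inner_smul_left, inner_gradient_left, this]

end Gradient

section Coercive

variable {E : Type*} [NormedAddCommGroup E] {F : E → ℝ} {c : ℝ}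

theorem pos_of_mul_norm_le (hc : 0 < c) (hlow : ∀ ξ, c * ‖ξ‖ ≤ F ξ) {ξ : E} (hξ : ξ ≠ 0) :
    0 < F ξ :=
  (mul_pos hc (norm_pos_iff.mpr hξ)).trans_le (hlow ξ)

theorem exists_pos_mul_norm_le [NormedSpace ℝ E] [ProperSpace E] [Nontrivial E]
    (hcont : Continuous F)
    (hhom : ∀ t : ℝ, 0 < t → ∀ ξ, F (t • ξ) = t * F ξ) (hpos : ∀ ξ, ξ ≠ 0 → 0 < F ξ) :
    ∃ c > 0, ∀ ξ, c * ‖ξ‖ ≤ F ξ := by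
  obtain ⟨z, hz, hzmin⟩ := (isCompact_sphere (0 : E) 1).exists_isMinOn
    (NormedSpace.sphere_nonempty.mpr zero_le_one) hcont.continuousOn
  have hF0 : F 0 = 0 := by
    have h2 := hhom 2 two_pos 0
    rw [smul_zero] at h2
    linarith
  refine ⟨F z, hpos z (ne_zero_of_mem_unit_sphere ⟨z, hz⟩), fun ξ => ?_⟩
  rcases eq_or_ne ξ 0 with rfl | hξ
  · simp [hF0]
  have hnorm : 0 < ‖ξ‖ := norm_pos_iff.mpr hξ
  have hunit : ‖ξ‖⁻¹ • ξ ∈ Metric.sphere (0 : E) 1 := by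
    rw [mem_sphere_zero_iff_norm, norm_smul, norm_inv, norm_norm, inv_mul_cancel₀ hnorm.ne']
  calc F z * ‖ξ‖ ≤ F (‖ξ‖⁻¹ • ξ) * ‖ξ‖ := by gcongr; exact hzmin hunit
    _ = F ξ := by rw [hhom _ (inv_pos.mpr hnorm)]; field_simp

end Coercive

section DualGauge

variable {E : Type*} [NormedAddCommGroup E] [InnerProductSpace ℝ E]

noncomputable def dualGauge (F : E → ℝ) (x : E) : ℝ := ⨆ ξ : {ξ : E // ξ ≠ 0}, ⟪x, ξ.1⟫ / F ξ.1

theorem dualGauge_smul_of_pos (F : E → ℝ) {t : ℝ} (ht : 0 < t) (x : E) :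
    dualGauge F (t • x) = t * dualGauge F x := by
  simp only [dualGauge, Real.mul_iSup_of_nonneg ht.le, real_inner_smul_left, mul_div_assoc]

variable {F : E → ℝ} {c : ℝ}

theorem inner_div_le_dualGauge (hc : 0 < c) (hlow : ∀ ξ, c * ‖ξ‖ ≤ F ξ) (x : E) {ξ : E}
    (hξ : ξ ≠ 0) : ⟪x, ξ⟫ / F ξ ≤ dualGauge F x := by
  refine le_ciSup (f := fun ξ : {ξ : E // ξ ≠ 0} => ⟪x, ξ.1⟫ / F ξ.1) ⟨‖x‖ / c, ?_⟩ ⟨ξ, hξ⟩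
  rintro _ ⟨⟨η, hη⟩, rfl⟩
  have hnorm : 0 < ‖η‖ := norm_pos_iff.mpr hη
  calc ⟪x, η⟫ / F η ≤ (‖x‖ * ‖η‖) / (c * ‖η‖) :=
        div_le_div₀ (by positivity) (real_inner_le_norm x η) (by positivity) (hlow η)
    _ = ‖x‖ / c := mul_div_mul_right _ _ hnorm.ne'

theorem inner_le_dualGauge_mul (hc : 0 < c) (hlow : ∀ ξ, c * ‖ξ‖ ≤ F ξ) (x : E) {ξ : E}
    (hξ : ξ ≠ 0) : ⟪x, ξ⟫ ≤ dualGauge F x * F ξ :=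
  (div_le_iff₀ (pos_of_mul_norm_le hc hlow hξ)).mp (inner_div_le_dualGauge hc hlow x hξ)

theorem dualGauge_le [Nontrivial E] (hc : 0 < c) (hlow : ∀ ξ, c * ‖ξ‖ ≤ F ξ) {x : E} {r : ℝ}
    (h : ∀ ξ, ξ ≠ 0 → ⟪x, ξ⟫ ≤ r * F ξ) : dualGauge F x ≤ r :=
  have : Nonempty {ξ : E // ξ ≠ 0} := nonempty_subtype.mpr (exists_ne 0)
  ciSup_le fun ⟨ξ, hξ⟩ => (div_le_iff₀ (pos_of_mul_norm_le hc hlow hξ)).mpr (h ξ hξ)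

theorem dualGauge_pos (hc : 0 < c) (hlow : ∀ ξ, c * ‖ξ‖ ≤ F ξ) {x : E} (hx : x ≠ 0) :
    0 < dualGauge F x := by
  refine (div_pos ?_ (pos_of_mul_norm_le hc hlow hx)).trans_le
    (inner_div_le_dualGauge hc hlow x hx)
  rwa [real_inner_self_eq_norm_sq, sq_pos_iff, norm_ne_zero_iff]

theorem convexOn_dualGauge [Nontrivial E] (hc : 0 < c) (hlow : ∀ ξ, c * ‖ξ‖ ≤ F ξ) :
    ConvexOn ℝ univ (dualGauge F) := by
  refine ⟨convex_univ, fun x _ y _ a b ha hb _ => dualGauge_le hc hlow fun ξ hξ => ?_⟩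
  rw [inner_add_left, real_inner_smul_left, real_inner_smul_left, smul_eq_mul, smul_eq_mul,
    add_mul, mul_assoc, mul_assoc]
  exact add_le_add (mul_le_mul_of_nonneg_left (inner_le_dualGauge_mul hc hlow x hξ) ha)
    (mul_le_mul_of_nonneg_left (inner_le_dualGauge_mul hc hlow y hξ) hb)

end DualGauge

section Duality

variable {E : Type*} [NormedAddCommGroup E] [InnerProductSpace ℝ E] [CompleteSpace E]
  {F : E → ℝ} {c : ℝ} {x : E}

theorem dualGauge_gradient_eq_one (hconv : ConvexOn ℝ univ F)
    (hhom : ∀ t : ℝ, 0 < t → ∀ ξ, F (t • ξ) = t * F ξ) (hc : 0 < c) (hlow : ∀ ξ, c * ‖ξ‖ ≤ F ξ)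
    (hd : DifferentiableAt ℝ F x) (hx : x ≠ 0) : dualGauge F (gradient F x) = 1 := by
  have : Nontrivial E := nontrivial_of_ne x 0 hx
  have heuler := inner_gradient_self_of_smul_eq hd (hhom · · x)
  refine le_antisymm (dualGauge_le hc hlow fun ξ _ => ?_) ?_
  · rw [one_mul]
    exact hconv.inner_gradient_le_of_smul_eq hd (hhom · · x) ξ
  · have := inner_div_le_dualGauge hc hlow (gradient F x) hx
    rwa [heuler, div_self (pos_of_mul_norm_le hc hlow hx).ne'] at this

theorem smul_gradient_dualGauge_gradient (hconv : ConvexOn ℝ univ F)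
    (hhom : ∀ t : ℝ, 0 < t → ∀ ξ, F (t • ξ) = t * F ξ) (hc : 0 < c) (hlow : ∀ ξ, c * ‖ξ‖ ≤ F ξ)
    (hFd : ∀ y, y ≠ 0 → DifferentiableAt ℝ F y)
    (hFod : ∀ y, y ≠ 0 → DifferentiableAt ℝ (dualGauge F) y) (hx : x ≠ 0) :
    F x • gradient (dualGauge F) (gradient F x) = x := by
  have heuler := inner_gradient_self_of_smul_eq (hFd x hx) (hhom · · x)
  have hne : gradient F x ≠ 0 :=
    gradient_ne_zero_of_smul_eq (hFd x hx) (hhom · · x) (pos_of_mul_norm_le hc hlow hx).ne'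
  refine smul_gradient_eq_of_inner_le (hFod _ hne) (fun w => ?_) ?_
  · rw [real_inner_comm, mul_comm]
    exact inner_le_dualGauge_mul hc hlow w hx
  · rw [dualGauge_gradient_eq_one hconv hhom hc hlow (hFd x hx) hx, mul_one, real_inner_comm,
      heuler]

theorem apply_gradient_dualGauge_eq_one (hconv : ConvexOn ℝ univ F)
    (hhom : ∀ t : ℝ, 0 < t → ∀ ξ, F (t • ξ) = t * F ξ) (hc : 0 < c) (hlow : ∀ ξ, c * ‖ξ‖ ≤ F ξ)
    (hFd : ∀ y, y ≠ 0 → DifferentiableAt ℝ F y) (hFod : DifferentiableAt ℝ (dualGauge F) x)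
    (hx : x ≠ 0) : F (gradient (dualGauge F) x) = 1 := by
  have : Nontrivial E := nontrivial_of_ne x 0 hx
  set z := gradient (dualGauge F) x
  have hhomo : ∀ t : ℝ, 0 < t → dualGauge F (t • x) = t * dualGauge F x :=
    fun t ht => dualGauge_smul_of_pos F ht x
  have heuler : ⟪z, x⟫ = dualGauge F x := inner_gradient_self_of_smul_eq hFod hhomo
  have hpos := dualGauge_pos hc hlow hx
  have hz : z ≠ 0 := gradient_ne_zero_of_smul_eq hFod hhomo hpos.ne'
  refine le_antisymm ?_ ?_
  · calc F z = ⟪z, gradient F z⟫ := by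
          rw [real_inner_comm, inner_gradient_self_of_smul_eq (hFd z hz) (hhom · · z)]
      _ ≤ dualGauge F (gradient F z) :=
          (convexOn_dualGauge hc hlow).inner_gradient_le_of_smul_eq hFod hhomo _
      _ = 1 := dualGauge_gradient_eq_one hconv hhom hc hlow (hFd z hz) hz
  · have := inner_le_dualGauge_mul hc hlow x hz
    rw [real_inner_comm, heuler] at this
    exact (le_mul_iff_one_le_right hpos).mp this

theorem smul_gradient_gradient_dualGauge (hconv : ConvexOn ℝ univ F)
    (hhom : ∀ t : ℝ, 0 < t → ∀ ξ, F (t • ξ) = t * F ξ) (hc : 0 < c) (hlow : ∀ ξ, c * ‖ξ‖ ≤ F ξ)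
    (hFd : ∀ y, y ≠ 0 → DifferentiableAt ℝ F y) (hFod : DifferentiableAt ℝ (dualGauge F) x)
    (hx : x ≠ 0) : dualGauge F x • gradient F (gradient (dualGauge F) x) = x := by
  have hhomo : ∀ t : ℝ, 0 < t → dualGauge F (t • x) = t * dualGauge F x :=
    fun t ht => dualGauge_smul_of_pos F ht x
  have hpos := dualGauge_pos hc hlow hx
  have hz := gradient_ne_zero_of_smul_eq hFod hhomo hpos.ne'
  refine smul_gradient_eq_of_inner_le (hFd _ hz) (fun w => ?_) ?_
  · rcases eq_or_ne w 0 with rfl | hw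
    · simpa using mul_nonneg hpos.le (by simpa using hlow 0)
    · exact inner_le_dualGauge_mul hc hlow x hw
  · rw [apply_gradient_dualGauge_eq_one hconv hhom hc hlow hFd hFod hx, mul_one, real_inner_comm,
      inner_gradient_self_of_smul_eq hFod hhomo]

end Duality

theorem stmt_7_general (n : ℕ) (F : EuclideanSpace ℝ (Fin n) → ℝ)
    (hFconv : ConvexOn ℝ Set.univ F)
    (hFhom : ∀ (a : ℝ) (ξ : EuclideanSpace ℝ (Fin n)), F (a • ξ) = |a| * F ξ)
    (hFpos : ∀ ξ : EuclideanSpace ℝ (Fin n), ξ ≠ 0 → 0 < F ξ)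
    (Fo : EuclideanSpace ℝ (Fin n) → ℝ)
    (hFo : ∀ x, Fo x = ⨆ ξ : {ξ : EuclideanSpace ℝ (Fin n) // ξ ≠ 0},
      (inner ℝ x ξ.1 : ℝ) / F ξ.1)
    (hFdiff : ∀ x : EuclideanSpace ℝ (Fin n), x ≠ 0 → DifferentiableAt ℝ F x)
    (hFodiff : ∀ x : EuclideanSpace ℝ (Fin n), x ≠ 0 → DifferentiableAt ℝ Fo x) :
    ∀ x : EuclideanSpace ℝ (Fin n), x ≠ 0 →
      F x • gradient Fo (gradient F x) = x ∧ Fo x • gradient F (gradient Fo x) = x := by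
  obtain rfl : Fo = dualGauge F := funext hFo
  intro x hx
  have : Nontrivial (EuclideanSpace ℝ (Fin n)) := nontrivial_of_ne x 0 hx
  have hhom : ∀ t : ℝ, 0 < t → ∀ ξ, F (t • ξ) = t * F ξ := fun t ht ξ => by
    rw [hFhom, abs_of_pos ht]
  obtain ⟨c, hc, hlow⟩ := exists_pos_mul_norm_le
    (continuousOn_univ.mp (hFconv.continuousOn isOpen_univ)) hhom hFpos
  exact ⟨smul_gradient_dualGauge_gradient hFconv hhom hc hlow hFdiff hFodiff hx,
    smul_gradient_gradient_dualGauge hFconv hhom hc hlow hFdiff (hFodiff x hx) hx⟩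

/-- For a C¹ norm `F` on `ℝⁿ` with C¹ dual norm `F°`: for every `x ≠ 0`,
`F(x) • ∇F°(∇F(x)) = x` and `F°(x) • ∇F(∇F°(x)) = x`. -/
theorem stmt_7 (n : ℕ) (hn : 1 ≤ n) (F : EuclideanSpace ℝ (Fin n) → ℝ)
    (hFconv : ConvexOn ℝ Set.univ F)
    (hFhom : ∀ (a : ℝ) (ξ : EuclideanSpace ℝ (Fin n)), F (a • ξ) = |a| * F ξ)
    (hFpos : ∀ ξ : EuclideanSpace ℝ (Fin n), ξ ≠ 0 → 0 < F ξ)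
    (Fo : EuclideanSpace ℝ (Fin n) → ℝ)
    (hFo : ∀ x, Fo x = ⨆ ξ : {ξ : EuclideanSpace ℝ (Fin n) // ξ ≠ 0},
      (inner ℝ x ξ.1 : ℝ) / F ξ.1)
    (hFdiff : ∀ x : EuclideanSpace ℝ (Fin n), x ≠ 0 → DifferentiableAt ℝ F x)
    (hFdiffCont : ContinuousOn (gradient F) {x | x ≠ 0})
    (hFodiff : ∀ x : EuclideanSpace ℝ (Fin n), x ≠ 0 → DifferentiableAt ℝ Fo x)
    (hFodiffCont : ContinuousOn (gradient Fo) {x | x ≠ 0}) :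
    ∀ x : EuclideanSpace ℝ (Fin n), x ≠ 0 →
      F x • gradient Fo (gradient F x) = x ∧ Fo x • gradient F (gradient Fo x) = x :=
  stmt_7_general n F hFconv hFhom hFpos Fo hFo hFdiff hFodiff
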